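/- arXiv:2109.02983 — 3 statements merged into one kernel-verified Lean document; each statement's English description precedes it below -/
import Mathlib

section
/- Let ψ, s : [0,T]×ℝ → ℝ be C² solutions of the two-component nonlinear variational wave system: s²(ψ_tt − c(ψ)(c(ψ)ψ_x)_x) + 2s(ψ_t s_t − c(ψ)²ψ_x s_x) + c(ψ)c'(ψ)s_x² = 0 and s_tt − c(ψ)(c(ψ)s_x)_x − c(ψ)c'(ψ)ψ_x s_x − s(ψ_t² − c(ψ)²ψ_x²) + W₀'(s) = 0, with c smooth and positive and W₀ ∈ C¹. Define ℰ = ½(s²(ψ_t² + c(ψ)²ψ_x²) + s_t² + c(ψ)²s_x²) + W₀(s) and ℱ = s²ψ_tψ_x + s_t s_x. Then ∂_t ℰ − ∂_x(c(ψ)²ℱ) = 0. -/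
/-!
Expanding both derivatives by the chain rule, `∂_t ℰ - ∂_x (c(ψ)² ℱ)` is exactly `ψ_t`
times the first equation plus `s_t` times the second, once the mixed partials `ψ_xt = ψ_tx` and
`s_xt = s_tx` are identified by Schwarz's theorem; this is where the `C²` regularity enters.
-/

open Set Function

section MixedPartials

variable {E : Type*} [NormedAddCommGroup E] [NormedSpace ℝ E]

theorem HasFDerivAt.partial_fst {f : ℝ × ℝ → E} {f' : ℝ × ℝ →L[ℝ] E} {a b : ℝ}
    (hf : HasFDerivAt f f' (a, b)) : HasDerivAt (fun τ => f (τ, b)) (f' (1, 0)) a :=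
  hf.comp_hasDerivAt a ((hasDerivAt_id a).prodMk (hasDerivAt_const a b))

theorem HasFDerivAt.partial_snd {f : ℝ × ℝ → E} {f' : ℝ × ℝ →L[ℝ] E} {a b : ℝ}
    (hf : HasFDerivAt f f' (a, b)) : HasDerivAt (fun y => f (a, y)) (f' (0, 1)) b :=
  hf.comp_hasDerivAt b ((hasDerivAt_const b a).prodMk (hasDerivAt_id b))

variable {F Ft Fx : ℝ → ℝ → ℝ}

theorem partial_fst_eq_fderiv (hF : Differentiable ℝ (uncurry F))
    (hFt : ∀ t x, HasDerivAt (F · x) (Ft t x) t) :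
    Ft = fun t x => fderiv ℝ (uncurry F) (t, x) (1, 0) :=
  funext₂ fun t x => (hFt t x).unique (hF (t, x)).hasFDerivAt.partial_fst

theorem partial_snd_eq_fderiv (hF : Differentiable ℝ (uncurry F))
    (hFx : ∀ t x, HasDerivAt (F t ·) (Fx t x) x) :
    Fx = fun t x => fderiv ℝ (uncurry F) (t, x) (0, 1) :=
  funext₂ fun t x => (hFx t x).unique (hF (t, x)).hasFDerivAt.partial_snd

theorem ContDiff.hasFDerivAt_fderiv {H : Type*} [NormedAddCommGroup H] [NormedSpace ℝ H]
    {f : H → E} (hf : ContDiff ℝ 2 f) (p : H) :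
    HasFDerivAt (fderiv ℝ f) (fderiv ℝ (fderiv ℝ f) p) p :=
  ((hf.fderiv_right le_rfl).differentiable one_ne_zero p).hasFDerivAt

theorem ContDiff.hasDerivAt_partial_comm (hF : ContDiff ℝ 2 (uncurry F))
    (hFt : ∀ t x, HasDerivAt (F · x) (Ft t x) t) (hFx : ∀ t x, HasDerivAt (F t ·) (Fx t x) x)
    (t x : ℝ) :
    HasDerivAt (Fx · x) (fderiv ℝ (fderiv ℝ (uncurry F)) (t, x) (1, 0) (0, 1)) t ∧
      HasDerivAt (Ft t ·) (fderiv ℝ (fderiv ℝ (uncurry F)) (t, x) (1, 0) (0, 1)) x := by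
  have hD := hF.differentiable two_ne_zero
  have hD2 := hF.hasFDerivAt_fderiv (t, x)
  rw [partial_fst_eq_fderiv hD hFt, partial_snd_eq_fderiv hD hFx]
  constructor
  · simpa using hD2.partial_fst.clm_apply (hasDerivAt_const t ((0, 1) : ℝ × ℝ))
  · rw [hF.contDiffAt.isSymmSndFDerivAt (by simp)]
    simpa using hD2.partial_snd.clm_apply (hasDerivAt_const x ((1, 0) : ℝ × ℝ))

theorem ContDiff.hasDerivAt_partial_snd_snd (hF : ContDiff ℝ 2 (uncurry F))
    (hFx : ∀ t x, HasDerivAt (F t ·) (Fx t x) x) (t x : ℝ) :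
    HasDerivAt (Fx t ·) (fderiv ℝ (fderiv ℝ (uncurry F)) (t, x) (0, 1) (0, 1)) x := by
  rw [partial_snd_eq_fderiv (hF.differentiable two_ne_zero) hFx]
  simpa using (hF.hasFDerivAt_fderiv (t, x)).partial_snd.clm_apply
    (hasDerivAt_const x ((0, 1) : ℝ × ℝ))

end MixedPartials

noncomputable def energyDensity (c W₀ : ℝ → ℝ) (ψ s ψt ψx st sx : ℝ) : ℝ :=
  (1 / 2) * (s ^ 2 * (ψt ^ 2 + c ψ ^ 2 * ψx ^ 2) + st ^ 2 + c ψ ^ 2 * sx ^ 2) + W₀ s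

def energyFlux (s ψt ψx st sx : ℝ) : ℝ := s ^ 2 * ψt * ψx + st * sx

section EnergyDerivatives

variable {c W₀ ψ s a b p q : ℝ → ℝ} {t γ ω ψ' s' a' b' p' q' : ℝ}

theorem HasDerivAt.energyDensity (hc : HasDerivAt c γ (ψ t)) (hW : HasDerivAt W₀ ω (s t))
    (hψ : HasDerivAt ψ ψ' t) (hs : HasDerivAt s s' t) (ha : HasDerivAt a a' t)
    (hb : HasDerivAt b b' t) (hp : HasDerivAt p p' t) (hq : HasDerivAt q q' t) :
    HasDerivAt (fun τ => energyDensity c W₀ (ψ τ) (s τ) (a τ) (b τ) (p τ) (q τ))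
      (s t * s' * (a t ^ 2 + c (ψ t) ^ 2 * b t ^ 2)
        + s t ^ 2 * (a t * a' + c (ψ t) * γ * ψ' * b t ^ 2 + c (ψ t) ^ 2 * b t * b')
        + p t * p' + c (ψ t) * γ * ψ' * q t ^ 2 + c (ψ t) ^ 2 * q t * q' + ω * s') t := by
  have hcψ := hc.comp t hψ
  refine ((((((hs.pow 2).mul ((ha.pow 2).add ((hcψ.pow 2).mul (hb.pow 2)))).add (hp.pow 2)).add
    ((hcψ.pow 2).mul (hq.pow 2))).const_mul (1 / 2)).add (hW.comp t hs)).congr_deriv ?_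
  norm_num
  ring

theorem HasDerivAt.sq_mul_energyFlux (hc : HasDerivAt c γ (ψ t))
    (hψ : HasDerivAt ψ ψ' t) (hs : HasDerivAt s s' t) (ha : HasDerivAt a a' t)
    (hb : HasDerivAt b b' t) (hp : HasDerivAt p p' t) (hq : HasDerivAt q q' t) :
    HasDerivAt (fun y => c (ψ y) ^ 2 * energyFlux (s y) (a y) (b y) (p y) (q y))
      (2 * c (ψ t) * γ * ψ' * energyFlux (s t) (a t) (b t) (p t) (q t)
        + c (ψ t) ^ 2 * (2 * s t * s' * a t * b t + s t ^ 2 * (a' * b t + a t * b')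
          + p' * q t + p t * q')) t := by
  refine (((hc.comp t hψ).pow 2).mul ((((hs.pow 2).mul ha).mul hb).add (hp.mul hq))).congr_deriv ?_
  simp only [energyFlux]
  norm_num
  ring

end EnergyDerivatives

theorem energy_balance_2NVW_general
    (T : ℝ)
    (c c' : ℝ → ℝ) (hc' : ∀ q, HasDerivAt c (c' q) q)
    (W₀ W₀' : ℝ → ℝ) (hW₀ : ∀ q, HasDerivAt W₀ (W₀' q) q)
    (ψ s ψt ψx ψtt st sx stt : ℝ → ℝ → ℝ)
    (hψt : ∀ t x, HasDerivAt (fun τ => ψ τ x) (ψt t x) t)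
    (hψx : ∀ t x, HasDerivAt (fun y => ψ t y) (ψx t x) x)
    (hψtt : ∀ t x, HasDerivAt (fun τ => ψt τ x) (ψtt t x) t)
    (hst : ∀ t x, HasDerivAt (fun τ => s τ x) (st t x) t)
    (hsx : ∀ t x, HasDerivAt (fun y => s t y) (sx t x) x)
    (hstt : ∀ t x, HasDerivAt (fun τ => st τ x) (stt t x) t)
    (hC2ψ : ∀ t x, ContDiffAt ℝ 2 (fun p : ℝ × ℝ => ψ p.1 p.2) (t, x))
    (hC2s : ∀ t x, ContDiffAt ℝ 2 (fun p : ℝ × ℝ => s p.1 p.2) (t, x))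
    (hPDE1 : ∀ t x, t ∈ Icc 0 T →
      (s t x)^2 * (ψtt t x - c (ψ t x) * deriv (fun y => c (ψ t y) * ψx t y) x)
        + 2 * s t x * (ψt t x * st t x - c (ψ t x)^2 * ψx t x * sx t x)
        + c (ψ t x) * c' (ψ t x) * (sx t x)^2 = 0)
    (hPDE2 : ∀ t x, t ∈ Icc 0 T →
      stt t x - c (ψ t x) * deriv (fun y => c (ψ t y) * sx t y) x
        - c (ψ t x) * c' (ψ t x) * ψx t x * sx t x
        - s t x * ((ψt t x)^2 - c (ψ t x)^2 * (ψx t x)^2) + W₀' (s t x) = 0)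
    (ℰ ℱ : ℝ → ℝ → ℝ)
    (hℰ : ∀ t x, ℰ t x = (1/2) * ((s t x)^2 * ((ψt t x)^2 + c (ψ t x)^2 * (ψx t x)^2)
        + (st t x)^2 + c (ψ t x)^2 * (sx t x)^2) + W₀ (s t x))
    (hℱ : ∀ t x, ℱ t x = (s t x)^2 * ψt t x * ψx t x + st t x * sx t x) :
    ∀ t x, t ∈ Icc 0 T →
      ∃ Et Fx : ℝ, HasDerivAt (fun τ => ℰ τ x) Et t ∧
        HasDerivAt (fun y => c (ψ t y)^2 * ℱ t y) Fx x ∧ Et - Fx = 0 := by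
  intro t x ht
  have hψC2 : ContDiff ℝ 2 (uncurry ψ) := contDiff_iff_contDiffAt.mpr fun p => hC2ψ p.1 p.2
  have hsC2 : ContDiff ℝ 2 (uncurry s) := contDiff_iff_contDiffAt.mpr fun p => hC2s p.1 p.2
  obtain ⟨hψxt, hψtx⟩ := hψC2.hasDerivAt_partial_comm hψt hψx t x
  obtain ⟨hsxt, hstx⟩ := hsC2.hasDerivAt_partial_comm hst hsx t x
  have hψxx := hψC2.hasDerivAt_partial_snd_snd hψx t x
  have hsxx := hsC2.hasDerivAt_partial_snd_snd hsx t x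
  have hcψx : HasDerivAt (fun y => c (ψ t y)) (c' (ψ t x) * ψx t x) x :=
    (hc' (ψ t x)).comp x (hψx t x)
  have pde₁ := hPDE1 t x ht
  have pde₂ := hPDE2 t x ht
  rw [(hcψx.fun_mul hψxx).deriv] at pde₁
  rw [(hcψx.fun_mul hsxx).deriv] at pde₂
  have hE :=
    ((hc' _).energyDensity (hW₀ _) (hψt t x) (hst t x) (hψtt t x) hψxt (hstt t x) hsxt)
    |>.congr_of_eventuallyEq (f₁ := (ℰ · x)) (.of_forall fun τ => hℰ τ x)
  have hF := ((hc' _).sq_mul_energyFlux (hψx t x) (hsx t x) hψtx hψxx hstx hsxx)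
    |>.congr_of_eventuallyEq (f₁ := fun y => c (ψ t y) ^ 2 * ℱ t y)
      (.of_forall fun y => congrArg (c (ψ t y) ^ 2 * ·) (hℱ t y))
  refine ⟨_, _, hE, hF, ?_⟩
  simp only [energyFlux]
  linear_combination ψt t x * pde₁ + st t x * pde₂

theorem energy_balance_2NVW
    (T : ℝ) (hT : 0 < T)
    (c c' : ℝ → ℝ) (hc : ∀ q, 0 < c q) (hc' : ∀ q, HasDerivAt c (c' q) q)
    (W₀ W₀' : ℝ → ℝ) (hW₀ : ∀ q, HasDerivAt W₀ (W₀' q) q)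
    (ψ s ψt ψx ψtt st sx stt : ℝ → ℝ → ℝ)
    (hψt : ∀ t x, HasDerivAt (fun τ => ψ τ x) (ψt t x) t)
    (hψx : ∀ t x, HasDerivAt (fun y => ψ t y) (ψx t x) x)
    (hψtt : ∀ t x, HasDerivAt (fun τ => ψt τ x) (ψtt t x) t)
    (hst : ∀ t x, HasDerivAt (fun τ => s τ x) (st t x) t)
    (hsx : ∀ t x, HasDerivAt (fun y => s t y) (sx t x) x)
    (hstt : ∀ t x, HasDerivAt (fun τ => st τ x) (stt t x) t)
    (hC2ψ : ∀ t x, ContDiffAt ℝ 2 (fun p : ℝ × ℝ => ψ p.1 p.2) (t, x))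
    (hC2s : ∀ t x, ContDiffAt ℝ 2 (fun p : ℝ × ℝ => s p.1 p.2) (t, x))
    (hPDE1 : ∀ t x, t ∈ Icc 0 T →
      (s t x)^2 * (ψtt t x - c (ψ t x) * deriv (fun y => c (ψ t y) * ψx t y) x)
        + 2 * s t x * (ψt t x * st t x - c (ψ t x)^2 * ψx t x * sx t x)
        + c (ψ t x) * c' (ψ t x) * (sx t x)^2 = 0)
    (hPDE2 : ∀ t x, t ∈ Icc 0 T →
      stt t x - c (ψ t x) * deriv (fun y => c (ψ t y) * sx t y) x
        - c (ψ t x) * c' (ψ t x) * ψx t x * sx t x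
        - s t x * ((ψt t x)^2 - c (ψ t x)^2 * (ψx t x)^2) + W₀' (s t x) = 0)
    (ℰ ℱ : ℝ → ℝ → ℝ)
    (hℰ : ∀ t x, ℰ t x = (1/2) * ((s t x)^2 * ((ψt t x)^2 + c (ψ t x)^2 * (ψx t x)^2)
        + (st t x)^2 + c (ψ t x)^2 * (sx t x)^2) + W₀ (s t x))
    (hℱ : ∀ t x, ℱ t x = (s t x)^2 * ψt t x * ψx t x + st t x * sx t x) :
    ∀ t x, t ∈ Icc 0 T →
      ∃ Et Fx : ℝ, HasDerivAt (fun τ => ℰ τ x) Et t ∧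
        HasDerivAt (fun y => c (ψ t y)^2 * ℱ t y) Fx x ∧ Et - Fx = 0 :=
  energy_balance_2NVW_general T c c' hc' W₀ W₀' hW₀ ψ s ψt ψx ψtt st sx stt hψt hψx hψtt hst hsx
    hstt hC2ψ hC2s hPDE1 hPDE2 ℰ ℱ hℰ hℱ
end

section
/- With the same hypotheses and notation as the previous statement, classical solutions of the two-component nonlinear variational wave system also satisfy the momentum balance ∂_t ℱ − ∂_x(ℰ − 2W₀(s)) = 0. -/
/-!
Differentiating `ℱ` in `t` and `ℰ - 2W₀(s)` in `x` and equating the mixed partials `ψ_tx = ψ_xt`,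
`s_tx = s_xt` (Schwarz, from `C²`), the difference `∂_t ℱ - ∂_x(ℰ - 2W₀(s))` is exactly
`ψ_x · (first equation) + s_x · (second equation)`, hence vanishes on solutions.
-/

open Set Function

lemma HasDerivAt.fderiv_apply_of_contDiffAt {E : Type*} [NormedAddCommGroup E] [NormedSpace ℝ E]
    {F : E → ℝ} {γ : ℝ → E} {w : E} {r : ℝ}
    (hγ : HasDerivAt γ w r) (hF : ContDiffAt ℝ 2 F (γ r)) (v : E) :
    HasDerivAt (fun r => fderiv ℝ F (γ r) v) (fderiv ℝ (fderiv ℝ F) (γ r) w v) r := by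
  have hD := ((hF.fderiv_right (by norm_num)).differentiableAt one_ne_zero).hasFDerivAt
  simpa only [comp_def, ContinuousLinearMap.comp_zero, zero_add, ContinuousLinearMap.flip_apply]
    using (hD.clm_apply (hasFDerivAt_const v _)).comp_hasDerivAt r hγ

section Partials

variable {f ft fx : ℝ → ℝ → ℝ}

lemma hasDerivAt_prodMk_fst (t x : ℝ) : HasDerivAt (fun τ : ℝ => (τ, x)) ((1 : ℝ), (0 : ℝ)) t :=
  (hasDerivAt_id t).prodMk (hasDerivAt_const t x)

lemma hasDerivAt_prodMk_snd (t x : ℝ) : HasDerivAt (fun y : ℝ => (t, y)) ((0 : ℝ), (1 : ℝ)) x :=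
  (hasDerivAt_const x t).prodMk (hasDerivAt_id x)

lemma partial_fst_eq_fderiv_s11 (hft : ∀ t x, HasDerivAt (fun τ => f τ x) (ft t x) t)
    (hf : ∀ t x, DifferentiableAt ℝ (uncurry f) (t, x)) :
    ft = fun t x => fderiv ℝ (uncurry f) (t, x) (1, 0) := by
  ext t x
  have h := (hf t x).hasFDerivAt.comp_hasDerivAt t (hasDerivAt_prodMk_fst t x)
  exact (hft t x).unique h

lemma partial_snd_eq_fderiv_s11 (hfx : ∀ t x, HasDerivAt (fun y => f t y) (fx t x) x)
    (hf : ∀ t x, DifferentiableAt ℝ (uncurry f) (t, x)) :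
    fx = fun t x => fderiv ℝ (uncurry f) (t, x) (0, 1) := by
  ext t x
  have h := (hf t x).hasFDerivAt.comp_hasDerivAt x (hasDerivAt_prodMk_snd t x)
  exact (hfx t x).unique h

lemma hasDerivAt_second_partials (hft : ∀ t x, HasDerivAt (fun τ => f τ x) (ft t x) t)
    (hfx : ∀ t x, HasDerivAt (fun y => f t y) (fx t x) x)
    (hf : ∀ t x, ContDiffAt ℝ 2 (uncurry f) (t, x)) (t x : ℝ) :
    let D := fderiv ℝ (fderiv ℝ (uncurry f)) (t, x)
    HasDerivAt (fun y => ft t y) (D (0, 1) (1, 0)) x ∧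
      HasDerivAt (fun τ => fx τ x) (D (0, 1) (1, 0)) t ∧
      HasDerivAt (fun y => fx t y) (D (0, 1) (0, 1)) x := by
  have hdiff : ∀ t x, DifferentiableAt ℝ (uncurry f) (t, x) := fun t x =>
    (hf t x).differentiableAt (by norm_num)
  rw [partial_fst_eq_fderiv_s11 hft hdiff, partial_snd_eq_fderiv_s11 hfx hdiff]
  dsimp only
  refine ⟨?_, ?_, ?_⟩
  · exact (hasDerivAt_prodMk_snd t x).fderiv_apply_of_contDiffAt (hf t x) _
  · rw [(hf t x).isSymmSndFDerivAt (by simp) (0, 1) (1, 0)]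
    exact (hasDerivAt_prodMk_fst t x).fderiv_apply_of_contDiffAt (hf t x) _
  · exact (hasDerivAt_prodMk_snd t x).fderiv_apply_of_contDiffAt (hf t x) _

end Partials

section Densities

variable {s p q u v C : ℝ → ℝ} {s' p' q' u' v' C' r : ℝ}

lemma hasDerivAt_momentum_density (hs : HasDerivAt s s' r) (hp : HasDerivAt p p' r)
    (hq : HasDerivAt q q' r) (hu : HasDerivAt u u' r) (hv : HasDerivAt v v' r) :
    HasDerivAt (fun r => s r ^ 2 * p r * q r + u r * v r)
      (2 * s r * s' * p r * q r + s r ^ 2 * p' * q r + s r ^ 2 * p r * q'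
        + u' * v r + u r * v') r := by
  refine ((((hs.fun_pow 2).fun_mul hp).fun_mul hq).fun_add (hu.fun_mul hv)).congr_deriv ?_
  push_cast
  ring

lemma hasDerivAt_wave_energy_density (hs : HasDerivAt s s' r) (hp : HasDerivAt p p' r)
    (hq : HasDerivAt q q' r) (hu : HasDerivAt u u' r) (hv : HasDerivAt v v' r)
    (hC : HasDerivAt C C' r) :
    HasDerivAt
      (fun r => 1 / 2 * (s r ^ 2 * (p r ^ 2 + C r ^ 2 * q r ^ 2) + u r ^ 2 + C r ^ 2 * v r ^ 2))
      (s r * s' * (p r ^ 2 + C r ^ 2 * q r ^ 2)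
        + s r ^ 2 * (p r * p' + C r * C' * q r ^ 2 + C r ^ 2 * q r * q')
        + u r * u' + C r * C' * v r ^ 2 + C r ^ 2 * v r * v') r := by
  have hC2 := hC.fun_pow 2
  refine (((((hs.fun_pow 2).fun_mul ((hp.fun_pow 2).fun_add (hC2.fun_mul (hq.fun_pow 2)))).fun_add
    (hu.fun_pow 2)).fun_add (hC2.fun_mul (hv.fun_pow 2))).const_mul (1 / 2 : ℝ)).congr_deriv ?_
  push_cast
  ring

end Densities

theorem momentum_balance_2NVW_general
    (T : ℝ)
    (c c' : ℝ → ℝ) (hc' : ∀ q, HasDerivAt c (c' q) q)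
    (W₀ W₀' : ℝ → ℝ) (hW₀ : ∀ q, HasDerivAt W₀ (W₀' q) q)
    (ψ s ψt ψx ψtt st sx stt : ℝ → ℝ → ℝ)
    (hψt : ∀ t x, HasDerivAt (fun τ => ψ τ x) (ψt t x) t)
    (hψx : ∀ t x, HasDerivAt (fun y => ψ t y) (ψx t x) x)
    (hψtt : ∀ t x, HasDerivAt (fun τ => ψt τ x) (ψtt t x) t)
    (hst : ∀ t x, HasDerivAt (fun τ => s τ x) (st t x) t)
    (hsx : ∀ t x, HasDerivAt (fun y => s t y) (sx t x) x)
    (hstt : ∀ t x, HasDerivAt (fun τ => st τ x) (stt t x) t)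
    (hC2ψ : ∀ t x, ContDiffAt ℝ 2 (fun p : ℝ × ℝ => ψ p.1 p.2) (t, x))
    (hC2s : ∀ t x, ContDiffAt ℝ 2 (fun p : ℝ × ℝ => s p.1 p.2) (t, x))
    (hPDE1 : ∀ t x, t ∈ Icc 0 T →
      (s t x)^2 * (ψtt t x - c (ψ t x) * deriv (fun y => c (ψ t y) * ψx t y) x)
        + 2 * s t x * (ψt t x * st t x - c (ψ t x)^2 * ψx t x * sx t x)
        + c (ψ t x) * c' (ψ t x) * (sx t x)^2 = 0)
    (hPDE2 : ∀ t x, t ∈ Icc 0 T →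
      stt t x - c (ψ t x) * deriv (fun y => c (ψ t y) * sx t y) x
        - c (ψ t x) * c' (ψ t x) * ψx t x * sx t x
        - s t x * ((ψt t x)^2 - c (ψ t x)^2 * (ψx t x)^2) + W₀' (s t x) = 0)
    (ℰ ℱ : ℝ → ℝ → ℝ)
    (hℰ : ∀ t x, ℰ t x = (1/2) * ((s t x)^2 * ((ψt t x)^2 + c (ψ t x)^2 * (ψx t x)^2)
        + (st t x)^2 + c (ψ t x)^2 * (sx t x)^2) + W₀ (s t x))
    (hℱ : ∀ t x, ℱ t x = (s t x)^2 * ψt t x * ψx t x + st t x * sx t x) :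
    ∀ t x, t ∈ Icc 0 T →
      ∃ Ft Gx : ℝ, HasDerivAt (fun τ => ℱ τ x) Ft t ∧
        HasDerivAt (fun y => ℰ t y - 2 * W₀ (s t y)) Gx x ∧ Ft - Gx = 0 := by
  intro t x ht
  obtain ⟨hψtx, hψxt, hψxx⟩ := hasDerivAt_second_partials hψt hψx hC2ψ t x
  obtain ⟨hstx, hsxt, hsxx⟩ := hasDerivAt_second_partials hst hsx hC2s t x
  have hcψ : HasDerivAt (fun y => c (ψ t y)) (c' (ψ t x) * ψx t x) x := (hc' _).comp x (hψx t x)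
  have hWs : HasDerivAt (fun y => W₀ (s t y)) (W₀' (s t x) * sx t x) x := (hW₀ _).comp x (hsx t x)
  have hcψx : deriv (fun y => c (ψ t y) * ψx t y) x = _ := (hcψ.mul hψxx).deriv
  have hcsx : deriv (fun y => c (ψ t y) * sx t y) x = _ := (hcψ.mul hsxx).deriv
  have h1 := hcψx ▸ hPDE1 t x ht
  have h2 := hcsx ▸ hPDE2 t x ht
  have hℱt : HasDerivAt (fun τ => ℱ τ x) _ t :=
    (hasDerivAt_momentum_density (hst t x) (hψtt t x) hψxt (hstt t x) hsxt).congr_of_eventuallyEq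
      (.of_forall fun τ => hℱ τ x)
  have hℰx : HasDerivAt (fun y => ℰ t y - 2 * W₀ (s t y)) _ x :=
    (((hasDerivAt_wave_energy_density (hsx t x) hψtx hψxx hstx hsxx hcψ).add hWs).sub
      (hWs.const_mul 2)).congr_of_eventuallyEq
      (.of_forall fun y => by simp only [hℰ, Pi.add_apply, Pi.sub_apply])
  exact ⟨_, _, hℱt, hℰx, by linear_combination ψx t x * h1 + sx t x * h2⟩

theorem momentum_balance_2NVW
    (T : ℝ) (hT : 0 < T)
    (c c' : ℝ → ℝ) (hc : ∀ q, 0 < c q) (hc' : ∀ q, HasDerivAt c (c' q) q)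
    (W₀ W₀' : ℝ → ℝ) (hW₀ : ∀ q, HasDerivAt W₀ (W₀' q) q)
    (ψ s ψt ψx ψtt st sx stt : ℝ → ℝ → ℝ)
    (hψt : ∀ t x, HasDerivAt (fun τ => ψ τ x) (ψt t x) t)
    (hψx : ∀ t x, HasDerivAt (fun y => ψ t y) (ψx t x) x)
    (hψtt : ∀ t x, HasDerivAt (fun τ => ψt τ x) (ψtt t x) t)
    (hst : ∀ t x, HasDerivAt (fun τ => s τ x) (st t x) t)
    (hsx : ∀ t x, HasDerivAt (fun y => s t y) (sx t x) x)
    (hstt : ∀ t x, HasDerivAt (fun τ => st τ x) (stt t x) t)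
    (hC2ψ : ∀ t x, ContDiffAt ℝ 2 (fun p : ℝ × ℝ => ψ p.1 p.2) (t, x))
    (hC2s : ∀ t x, ContDiffAt ℝ 2 (fun p : ℝ × ℝ => s p.1 p.2) (t, x))
    (hPDE1 : ∀ t x, t ∈ Icc 0 T →
      (s t x)^2 * (ψtt t x - c (ψ t x) * deriv (fun y => c (ψ t y) * ψx t y) x)
        + 2 * s t x * (ψt t x * st t x - c (ψ t x)^2 * ψx t x * sx t x)
        + c (ψ t x) * c' (ψ t x) * (sx t x)^2 = 0)
    (hPDE2 : ∀ t x, t ∈ Icc 0 T →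
      stt t x - c (ψ t x) * deriv (fun y => c (ψ t y) * sx t y) x
        - c (ψ t x) * c' (ψ t x) * ψx t x * sx t x
        - s t x * ((ψt t x)^2 - c (ψ t x)^2 * (ψx t x)^2) + W₀' (s t x) = 0)
    (ℰ ℱ : ℝ → ℝ → ℝ)
    (hℰ : ∀ t x, ℰ t x = (1/2) * ((s t x)^2 * ((ψt t x)^2 + c (ψ t x)^2 * (ψx t x)^2)
        + (st t x)^2 + c (ψ t x)^2 * (sx t x)^2) + W₀ (s t x))
    (hℱ : ∀ t x, ℱ t x = (s t x)^2 * ψt t x * ψx t x + st t x * sx t x) :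
    ∀ t x, t ∈ Icc 0 T →
      ∃ Ft Gx : ℝ, HasDerivAt (fun τ => ℱ τ x) Ft t ∧
        HasDerivAt (fun y => ℰ t y - 2 * W₀ (s t y)) Gx x ∧ Ft - Gx = 0 :=
  momentum_balance_2NVW_general T c c' hc' W₀ W₀' hW₀ ψ s ψt ψx ψtt st sx stt hψt hψx hψtt hst hsx
    hstt hC2ψ hC2s hPDE1 hPDE2 ℰ ℱ hℰ hℱ
end

section
/- Suppose functions f₁, f₂ : [0,T] → ℝ≥0 satisfy (for p-norms of differences of two strong solutions) f(t) ≤ A + Bt + C∫₀ᵗ (t−σ)f(σ)dσ with constants A, B, C ≥ 0. Then f(t) ≤ (A + Bt)·e^{Ct²/2} for all t ∈ [0,T]. -/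
/-!
Put `F t = A + B t + C ∫₀ᵗ (t - σ) f σ dσ`, so that `f ≤ F`, `F 0 = A` and `F' t = B + C ∫₀ᵗ f`.
Since `f ≥ 0`, `F` is nondecreasing, hence `∫₀ᵗ f ≤ ∫₀ᵗ F ≤ t F t` and `F` satisfies the linear
differential inequality `F' ≤ B + C t F`. Integrating it against the factor `exp (-C t² / 2)`
gives `F t ≤ (A + B t) exp (C t² / 2)`.
-/

open Set Real intervalIntegral

lemma hasDerivAt_integral_sub_mul {f : ℝ → ℝ} (hf : Continuous f) (t : ℝ) :
    HasDerivAt (fun t => ∫ σ in (0 : ℝ)..t, (t - σ) * f σ) (∫ σ in (0 : ℝ)..t, f σ) t := by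
  have hsplit : (fun t => ∫ σ in (0 : ℝ)..t, (t - σ) * f σ) =
      fun t => t * (∫ σ in (0 : ℝ)..t, f σ) - ∫ σ in (0 : ℝ)..t, σ * f σ := by
    funext t
    simp only [sub_mul, ← integral_const_mul]
    exact integral_sub ((continuous_const.mul hf).intervalIntegrable 0 t)
      ((continuous_id.mul hf).intervalIntegrable 0 t)
  rw [hsplit]
  exact (((hasDerivAt_id t).mul (hf.integral_hasStrictDerivAt 0 t).hasDerivAt).sub
    ((continuous_id.mul hf).integral_hasStrictDerivAt 0 t).hasDerivAt).congr_deriv (by simp)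

lemma le_mul_exp_of_hasDerivAt_le {F F' : ℝ → ℝ} {B C T : ℝ} (hB : 0 ≤ B) (hC : 0 ≤ C)
    (hF : ∀ t, HasDerivAt F (F' t) t) (hF' : ∀ t ∈ Ico 0 T, F' t ≤ B + C * t * F t) :
    ∀ t ∈ Icc 0 T, F t ≤ (F 0 + B * t) * exp (C * t ^ 2 / 2) := by
  set E : ℝ → ℝ := fun t => exp (-(C * t ^ 2 / 2))
  have hE : ∀ t, HasDerivAt E (-(C * t) * E t) t := fun t =>
    ((((hasDerivAt_pow 2 t).const_mul C).div_const 2).neg.exp).congr_deriv (by simp [E]; ring)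
  have hE_le_one : ∀ t, E t ≤ 1 := fun t => exp_le_one_iff.mpr (by nlinarith [sq_nonneg t])
  have hFE : ∀ t, HasDerivAt (fun t => F t * E t) ((F' t - C * t * F t) * E t) t := fun t =>
    ((hF t).mul (hE t)).congr_deriv (by ring)
  have hlin : ∀ t, HasDerivAt (fun t => F 0 + B * t) B t := fun t => by
    simpa using ((hasDerivAt_id t).const_mul B).const_add (F 0)
  have hweighted : ∀ t ∈ Icc 0 T, F t * E t ≤ F 0 + B * t := by
    refine image_le_of_deriv_right_le_deriv_boundary
      (fun t _ => (hFE t).continuousAt.continuousWithinAt) (fun t _ => (hFE t).hasDerivWithinAt)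
      (by simp [E]) (fun t _ => (hlin t).continuousAt.continuousWithinAt)
      (fun t _ => (hlin t).hasDerivWithinAt) fun t ht => ?_
    calc (F' t - C * t * F t) * E t ≤ B * E t :=
          mul_le_mul_of_nonneg_right (by linarith [hF' t ht]) (exp_pos _).le
      _ ≤ B := mul_le_of_le_one_right hB (hE_le_one t)
  intro t ht
  have := hweighted t ht
  rwa [show E t = (exp (C * t ^ 2 / 2))⁻¹ from exp_neg _, ← div_eq_mul_inv,
    div_le_iff₀ (exp_pos _)] at this

lemma gronwall_quadratic_kernel_of_continuous {T A B C : ℝ} (hB : 0 ≤ B) (hC : 0 ≤ C)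
    {f : ℝ → ℝ} (hf : Continuous f) (hf_nonneg : ∀ t ∈ Icc 0 T, 0 ≤ f t)
    (hint : ∀ t ∈ Icc 0 T, f t ≤ A + B * t + C * ∫ σ in (0 : ℝ)..t, (t - σ) * f σ) :
    ∀ t ∈ Icc 0 T, f t ≤ (A + B * t) * exp (C * t ^ 2 / 2) := by
  set F : ℝ → ℝ := fun t => A + B * t + C * ∫ σ in (0 : ℝ)..t, (t - σ) * f σ
  have hF : ∀ t, HasDerivAt F (B + C * ∫ σ in (0 : ℝ)..t, f σ) t := fun t =>
    ((((hasDerivAt_id t).const_mul B).const_add A).add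
      ((hasDerivAt_integral_sub_mul hf t).const_mul C)).congr_deriv (by ring)
  have hF_mono : MonotoneOn F (Icc 0 T) := by
    refine monotoneOn_of_deriv_nonneg (convex_Icc 0 T)
      (fun t _ => (hF t).continuousAt.continuousWithinAt)
      (fun t _ => (hF t).differentiableAt.differentiableWithinAt) fun t ht => ?_
    rw [interior_Icc] at ht
    rw [(hF t).deriv]
    have : 0 ≤ ∫ σ in (0 : ℝ)..t, f σ :=
      integral_nonneg ht.1.le fun σ hσ => hf_nonneg σ ⟨hσ.1, hσ.2.trans ht.2.le⟩
    positivity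
  have hintegral_le : ∀ t ∈ Icc 0 T, ∫ σ in (0 : ℝ)..t, f σ ≤ t * F t := fun t ht => by
    have : ∫ σ in (0 : ℝ)..t, f σ ≤ ∫ _ in (0 : ℝ)..t, F t :=
      integral_mono_on ht.1 (hf.intervalIntegrable 0 t) intervalIntegrable_const fun σ hσ =>
        (hint σ ⟨hσ.1, hσ.2.trans ht.2⟩).trans (hF_mono ⟨hσ.1, hσ.2.trans ht.2⟩ ht hσ.2)
    simpa using this
  have hbound := le_mul_exp_of_hasDerivAt_le hB hC hF fun t ht => by
    nlinarith [hintegral_le t (Ico_subset_Icc_self ht)]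
  intro t ht
  simpa [F] using (hint t ht).trans (hbound t ht)

lemma ContinuousOn.exists_continuous_eqOn_Icc {α β : Type*} [LinearOrder α] [TopologicalSpace α]
    [OrderTopology α] [TopologicalSpace β] {a b : α} (hab : a ≤ b) {f : α → β}
    (hf : ContinuousOn f (Icc a b)) : ∃ g : α → β, Continuous g ∧ EqOn g f (Icc a b) :=
  ⟨IccExtend hab ((Icc a b).domRestrict f), hf.domRestrict.Icc_extend',
    fun _ hx => IccExtend_of_mem hab _ hx⟩

theorem gronwall_quadratic_kernel_general
    (T A B C : ℝ) (hT : 0 < T) (hB : 0 ≤ B) (hC : 0 ≤ C)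
    (f : ℝ → ℝ) (hfcont : ContinuousOn f (Icc 0 T))
    (hfnonneg : ∀ t ∈ Icc 0 T, 0 ≤ f t)
    (hint : ∀ t ∈ Icc 0 T, f t ≤ A + B * t + C * ∫ σ in (0:ℝ)..t, (t - σ) * f σ) :
    ∀ t ∈ Icc 0 T, f t ≤ (A + B * t) * exp (C * t ^ 2 / 2) := by
  obtain ⟨g, hg, hgf⟩ := hfcont.exists_continuous_eqOn_Icc hT.le
  have hg_int : ∀ t ∈ Icc 0 T,
      ∫ σ in (0 : ℝ)..t, (t - σ) * g σ = ∫ σ in (0 : ℝ)..t, (t - σ) * f σ := fun t ht =>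
    integral_congr fun σ hσ => by
      rw [uIcc_of_le ht.1] at hσ
      rw [hgf ⟨hσ.1, hσ.2.trans ht.2⟩]
  intro t ht
  rw [← hgf ht]
  refine gronwall_quadratic_kernel_of_continuous hB hC hg (fun s hs => hgf hs ▸ hfnonneg s hs)
    (fun s hs => ?_) t ht
  rw [hgf hs, hg_int s hs]
  exact hint s hs

theorem gronwall_quadratic_kernel
    (T A B C : ℝ) (hT : 0 < T) (hA : 0 ≤ A) (hB : 0 ≤ B) (hC : 0 ≤ C)
    (f : ℝ → ℝ) (hfcont : ContinuousOn f (Icc 0 T))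
    (hfnonneg : ∀ t ∈ Icc 0 T, 0 ≤ f t)
    (hint : ∀ t ∈ Icc 0 T, f t ≤ A + B * t + C * ∫ σ in (0:ℝ)..t, (t - σ) * f σ) :
    ∀ t ∈ Icc 0 T, f t ≤ (A + B * t) * exp (C * t ^ 2 / 2) :=
  gronwall_quadratic_kernel_general T A B C hT hB hC f hfcont hfnonneg hint
end
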